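/- arXiv:1501.03638 — 2 statements merged into one kernel-verified Lean document; each statement's English description precedes it below -/
import Mathlib

section
/- Let α, β, γ > 0. The mixture of Bessel distributions m_{α,β,γ} admits the representation m_{α,β,γ}(dx) = (1/(1+α))^γ δ_0(dx) + g_{α,β,γ}(x) dx on [0,∞), where g_{α,β,γ}(x) = ∑_{k=1}^∞ [α^k Γ(k+γ)/((α+1)^{k+γ} Γ(γ) k!)] · Γ(x; k, β) and Γ(x; k, β) = β^k x^{k−1} e^{−βx}/Γ(k) is the density of the Gamma distribution with shape k and rate β. -/
open MeasureTheory Set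

noncomputable section

/-- Modified Bessel function of the first kind of order 1. -/
def besselI1 (r : ℝ) : ℝ :=
  (r / 2) * ∑' k : ℕ, (r ^ 2 / 4) ^ k / (Nat.factorial k * Nat.factorial (k + 1))

/-- Modified Bessel function of the first kind of order `q` (for `r > 0`). -/
def besselI (q r : ℝ) : ℝ :=
  (r / 2) ^ q * ∑' k : ℕ, (r ^ 2 / 4) ^ k / (Nat.factorial k * Real.Gamma (q + k + 1))

/-- Density part of the Bessel distribution with parameters `α, β` (for `x > 0`). -/
def besselDensity (α β x : ℝ) : ℝ :=
  β * Real.exp (-α - β * x) * Real.sqrt (α / (β * x)) * besselI1 (2 * Real.sqrt (α * β * x))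

/-- The Bessel distribution `μ_{α,β}` on `[0,∞)`. -/
def besselMeasure (α β : ℝ) : Measure ℝ :=
  ENNReal.ofReal (Real.exp (-α)) • Measure.dirac 0 +
    volume.withDensity fun x => ENNReal.ofReal (Set.indicator (Set.Ioi 0) (besselDensity α β) x)

/-- The mixture of Bessel distributions `m_{α,β,γ}`, mixing `μ_{αt,β}` over `t`
with Gamma(`γ`, 1) weights. -/
def besselMixture (α β γ : ℝ) : Measure ℝ :=
  (ProbabilityTheory.gammaMeasure γ 1).bind fun t => besselMeasure (α * t) β

/-- Density of the Gamma distribution with shape `k` and rate `r`. -/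
def gammaDens (k r x : ℝ) : ℝ :=
  r ^ k * x ^ (k - 1) * Real.exp (-r * x) / Real.Gamma k

/-- The density `g_{α,β,γ}`, a mixture of Gamma densities. -/
def gMix (α β γ x : ℝ) : ℝ :=
  ∑' k : ℕ, α ^ (k + 1) * Real.Gamma ((k + 1 : ℕ) + γ) /
      ((α + 1) ^ ((k + 1 : ℕ) + γ) * Real.Gamma γ * Nat.factorial (k + 1)) *
    gammaDens (k + 1 : ℕ) β x

/-- Transition density of the CIR process with parameters `a, θ, σ`. -/
def cirDensity (a θ σ : ℝ) (t x y : ℝ) : ℝ :=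
  let ρ : ℝ := 2 * a / (σ ^ 2 * (1 - Real.exp (-a * t)))
  let q : ℝ := 2 * a * θ / σ ^ 2 - 1
  let v : ℝ := ρ * y
  if x = 0 then ρ * v ^ q * Real.exp (-v) / Real.Gamma (q + 1)
  else
    let u : ℝ := ρ * x * Real.exp (-a * t)
    ρ * Real.exp (-u - v) * (v / u) ^ (q / 2) * besselI q (2 * Real.sqrt (u * v))

/-- The function `L₁(t) = e^{-at} + (σ²d/(2a))(1 - e^{-at})`. -/
def L1 (a σ d t : ℝ) : ℝ :=
  Real.exp (-a * t) + σ ^ 2 * d / (2 * a) * (1 - Real.exp (-a * t))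

/-- The jump part `h(t,z)` of the BAJD transition density. -/
def bajdJump (a σ c d : ℝ) (t z : ℝ) : ℝ :=
  if 0 < a - σ ^ 2 * d / 2 then
    gMix (1 / L1 a σ d t - 1) (d / L1 a σ d t) (c / (a - σ ^ 2 * d / 2)) z
  else if a - σ ^ 2 * d / 2 < 0 then
    gMix (L1 a σ d t - 1) d (-c / (a - σ ^ 2 * d / 2)) z
  else
    d * Real.exp (-((c / a) * (1 - Real.exp (-a * t))) - d * z) *
      Real.sqrt ((c / a) * (1 - Real.exp (-a * t)) / (d * z)) *
      besselI1 (2 * Real.sqrt ((c / a) * (1 - Real.exp (-a * t)) * d * z))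

/-- Transition density of the basic affine jump-diffusion. -/
def bajdDensity (a θ σ c d : ℝ) (t x y : ℝ) : ℝ :=
  (if a - σ ^ 2 * d / 2 = 0 then Real.exp (-((c / a) * (1 - Real.exp (-a * t))))
    else L1 a σ d t ^ (c / (a - σ ^ 2 * d / 2))) * cirDensity a θ σ t x y +
  ∫ z in (0 : ℝ)..y, cirDensity a θ σ t x (y - z) * bajdJump a σ c d t z

/-- The limit jump part `h∞(z)` appearing in the invariant density of the BAJD. -/
def bajdJumpInf (a σ c d : ℝ) (z : ℝ) : ℝ :=
  if 0 < a - σ ^ 2 * d / 2 then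
    gMix (2 * a / (σ ^ 2 * d) - 1) (2 * a / σ ^ 2) (c / (a - σ ^ 2 * d / 2)) z
  else if a - σ ^ 2 * d / 2 < 0 then
    gMix (σ ^ 2 * d / (2 * a) - 1) d (-c / (a - σ ^ 2 * d / 2)) z
  else
    d * Real.exp (-(c / a) - d * z) * Real.sqrt (c / (a * d * z)) *
      besselI1 (2 * Real.sqrt (c * d * z / a))

/-- Density of the unique invariant probability measure of the BAJD. -/
def invDensity (a θ σ c d : ℝ) (y : ℝ) : ℝ :=
  (if a - σ ^ 2 * d / 2 = 0 then Real.exp (-(c / a))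
    else (σ ^ 2 * d / (2 * a)) ^ (c / (a - σ ^ 2 * d / 2))) *
    gammaDens (2 * a * θ / σ ^ 2) (2 * a / σ ^ 2) y +
  ∫ z in (0 : ℝ)..y, gammaDens (2 * a * θ / σ ^ 2) (2 * a / σ ^ 2) (y - z) * bajdJumpInf a σ c d z

end

/-!
The Bessel law `μ_{a,β}` is compound Poisson: expanding `I_1` shows that its density is
`∑_{n ≥ 1} e^{-a} aⁿ / n! · Γ(x; n, β)`, while its atom `e^{-a}` is the `n = 0` term. Mixing
`a = α t` over `t ∼ Gamma(γ, 1)` turns each Poisson weight into a negative binomial one, because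
`e^{-α t} (α t)ⁿ / n!` times the `Gamma(γ, 1)` density is a multiple of the `Gamma(n + γ, 1 + α)`
density. Sums and integrals are exchanged by monotone convergence, all terms being nonnegative.
-/

open Filter ProbabilityTheory
open scoped Nat

/-- Negative binomial weights with `γ` successes and success probability `1 / (1 + α)`. -/
noncomputable def negBinomialPMFReal (α γ : ℝ) (n : ℕ) : ℝ :=
  α ^ n * Real.Gamma (n + γ) / ((α + 1) ^ ((n : ℝ) + γ) * Real.Gamma γ * n !)

lemma summable_besselI1_series (r : ℝ) :
    Summable fun k : ℕ => (r ^ 2 / 4) ^ k / (k ! * (k + 1)! : ℝ) := by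
  refine (Real.summable_pow_div_factorial (r ^ 2 / 4)).of_nonneg_of_le (fun k => by positivity)
    fun k => div_le_div_of_nonneg_left (by positivity) (by positivity) ?_
  exact le_mul_of_one_le_right (by positivity) (by exact_mod_cast (k + 1).factorial_pos)

lemma measurable_besselI1 : Measurable besselI1 := by
  have : Measurable fun r : ℝ => ∑' k : ℕ, (r ^ 2 / 4) ^ k / (k ! * (k + 1)! : ℝ) :=
    measurable_of_tendsto_metrizable (fun n => by fun_prop)
      (tendsto_pi_nhds.2 fun r => (summable_besselI1_series r).hasSum.tendsto_sum_nat)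
  unfold besselI1
  fun_prop

lemma besselI1_two_mul_sqrt {y : ℝ} (hy : 0 ≤ y) :
    besselI1 (2 * Real.sqrt y) = Real.sqrt y * ∑' k : ℕ, y ^ k / (k ! * (k + 1)! : ℝ) := by
  rw [besselI1, mul_pow, Real.sq_sqrt hy]
  ring_nf

lemma gammaDens_natCast_succ (n : ℕ) (β x : ℝ) :
    gammaDens (n + 1 : ℕ) β x = β * (β * x) ^ n * Real.exp (-(β * x)) / n ! := by
  rw [gammaDens, Nat.cast_succ, add_sub_cancel_right, Real.Gamma_nat_eq_factorial,
    Real.rpow_natCast, ← Nat.cast_succ, Real.rpow_natCast, pow_succ, neg_mul]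
  ring

lemma besselDensity_eq_tsum {a β x : ℝ} (ha : 0 ≤ a) (hβ : 0 < β) (hx : 0 < x) :
    besselDensity a β x =
      ∑' n, Real.exp (-a) * a ^ (n + 1) / (n + 1)! * gammaDens (n + 1 : ℕ) β x := by
  have hsqrt : Real.sqrt (a / (β * x)) * Real.sqrt (a * β * x) = a := by
    rw [← Real.sqrt_mul (by positivity), show a / (β * x) * (a * β * x) = a ^ 2 by field_simp,
      Real.sqrt_sq ha]
  rw [besselDensity, besselI1_two_mul_sqrt (by positivity), ← mul_assoc,
    mul_assoc (β * Real.exp (-a - β * x)), hsqrt, ← tsum_mul_left]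
  refine tsum_congr fun n => ?_
  rw [gammaDens_natCast_succ, sub_eq_add_neg, Real.exp_add]
  push_cast [Nat.factorial_succ]
  field_simp
  ring

lemma ofReal_tsum_mul_gammaDens {w : ℕ → ℝ} (hw₀ : ∀ n, 0 ≤ w n) (hw₁ : ∀ n, w n ≤ 1)
    {β x : ℝ} (hβ : 0 ≤ β) (hx : 0 ≤ x) :
    ENNReal.ofReal (∑' n, w n * gammaDens (n + 1 : ℕ) β x) =
      ∑' n, ENNReal.ofReal (w n) * ENNReal.ofReal (gammaDens (n + 1 : ℕ) β x) := by
  have hdens (n : ℕ) : 0 ≤ gammaDens (n + 1 : ℕ) β x := by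
    rw [gammaDens_natCast_succ]; positivity
  have hsum : Summable fun n : ℕ => gammaDens (n + 1 : ℕ) β x := by
    refine ((Real.summable_pow_div_factorial (β * x)).mul_left (β * Real.exp (-(β * x)))).congr
      fun n => ?_
    rw [gammaDens_natCast_succ]
    ring
  rw [ENNReal.ofReal_tsum_of_nonneg (fun n => mul_nonneg (hw₀ n) (hdens n))
    (hsum.of_nonneg_of_le (fun n => mul_nonneg (hw₀ n) (hdens n))
      fun n => mul_le_of_le_one_left (hdens n) (hw₁ n))]
  simp_rw [ENNReal.ofReal_mul (hw₀ _)]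

lemma measurable_ofReal_indicator_besselDensity (β : ℝ) :
    Measurable fun p : ℝ × ℝ => ENNReal.ofReal ((Ioi 0).indicator (besselDensity p.1 β) p.2) := by
  refine ENNReal.measurable_ofReal.comp
    (Measurable.indicator ?_ (measurableSet_Ioi.preimage measurable_snd))
  have := measurable_besselI1
  unfold besselDensity
  fun_prop

lemma besselMeasure_apply (a β : ℝ) {s : Set ℝ} (hs : MeasurableSet s) :
    besselMeasure a β s = ENNReal.ofReal (Real.exp (-a)) * Measure.dirac 0 s +
      ∫⁻ x in s, ENNReal.ofReal ((Ioi 0).indicator (besselDensity a β) x) := by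
  simp only [besselMeasure, Measure.coe_add, Pi.add_apply, Measure.smul_apply, smul_eq_mul,
    withDensity_apply _ hs]

lemma measurable_besselMeasure (β : ℝ) : Measurable fun a => besselMeasure a β := by
  refine Measure.measurable_of_measurable_coe _ fun s hs => ?_
  simp_rw [besselMeasure_apply _ β hs]
  exact ((ENNReal.measurable_ofReal.comp (by fun_prop)).mul_const _).add
    (measurable_ofReal_indicator_besselDensity β).lintegral_prod_right'

lemma bind_besselMeasure (ν : Measure ℝ) [SFinite ν] (α β : ℝ) :
    ν.bind (fun t => besselMeasure (α * t) β) =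
      (∫⁻ t, ENNReal.ofReal (Real.exp (-(α * t))) ∂ν) • Measure.dirac 0 +
        volume.withDensity fun x =>
          ∫⁻ t, ENNReal.ofReal ((Ioi 0).indicator (besselDensity (α * t) β) x) ∂ν := by
  have hmeas : Measurable fun t => besselMeasure (α * t) β :=
    (measurable_besselMeasure β).comp (measurable_const_mul α)
  ext s hs
  rw [Measure.bind_apply hs hmeas.aemeasurable]
  simp_rw [besselMeasure_apply _ β hs]
  rw [lintegral_add_left (by fun_prop), lintegral_mul_const _ (by fun_prop),
    lintegral_lintegral_swap
      (f := fun t x => ENNReal.ofReal ((Ioi 0).indicator (besselDensity (α * t) β) x))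
      ((measurable_ofReal_indicator_besselDensity β).comp
        ((measurable_const_mul α).prodMap measurable_id)).aemeasurable]
  simp only [Measure.coe_add, Pi.add_apply, Measure.smul_apply, smul_eq_mul,
    withDensity_apply _ hs]

instance (a r : ℝ) : SFinite (gammaMeasure a r) := by
  unfold gammaMeasure
  infer_instance

lemma ae_nonneg_gammaMeasure (a r : ℝ) : ∀ᵐ t ∂gammaMeasure a r, 0 ≤ t := by
  rw [gammaMeasure, ae_withDensity_iff (by unfold gammaPDF; fun_prop)]
  exact ae_of_all _ fun t ht => not_lt.1 fun h => ht (gammaPDF_of_neg h)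

lemma exp_neg_mul_pow_div_factorial_le_one {a : ℝ} (ha : 0 ≤ a) (n : ℕ) :
    Real.exp (-a) * a ^ n / n ! ≤ 1 :=
  calc Real.exp (-a) * a ^ n / n ! ≤ Real.exp (-a) * Real.exp a := by
        rw [mul_div_assoc]; gcongr; exact Real.pow_div_factorial_le_exp _ ha n
    _ = 1 := by rw [← Real.exp_add, neg_add_cancel, Real.exp_zero]

lemma negBinomialPMFReal_nonneg {α γ : ℝ} (hα : 0 ≤ α) (hγ : 0 < γ) (n : ℕ) :
    0 ≤ negBinomialPMFReal α γ n := by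
  unfold negBinomialPMFReal
  positivity

lemma negBinomialPMFReal_zero {α γ : ℝ} (hα : 0 ≤ α) (hγ : 0 < γ) :
    negBinomialPMFReal α γ 0 = (1 / (1 + α)) ^ γ := by
  have := (Real.Gamma_pos_of_pos hγ).ne'
  rw [negBinomialPMFReal, one_div, Real.inv_rpow (by positivity), add_comm 1 α]
  simp only [pow_zero, CharP.cast_eq_zero, zero_add, one_mul, Nat.factorial_zero, Nat.cast_one,
    mul_one]
  field_simp

lemma poissonWeight_mul_gammaPDFReal {α γ t : ℝ} (hα : 0 ≤ α) (hγ : 0 < γ) (ht : 0 < t)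
    (n : ℕ) :
    (1 : ℝ) ^ γ / Real.Gamma γ * t ^ (γ - 1) * Real.exp (-(1 * t)) *
        (Real.exp (-(α * t)) * (α * t) ^ n / n !) =
      negBinomialPMFReal α γ n * ((1 + α) ^ ((n : ℝ) + γ) / Real.Gamma (n + γ) *
        t ^ ((n : ℝ) + γ - 1) * Real.exp (-((1 + α) * t))) := by
  have hΓ := (Real.Gamma_pos_of_pos hγ).ne'
  have hΓn := (Real.Gamma_pos_of_pos (by positivity : 0 < (n : ℝ) + γ)).ne'
  have hpow : (0 : ℝ) < (α + 1) ^ ((n : ℝ) + γ) := by positivity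
  rw [negBinomialPMFReal, add_sub_assoc, Real.rpow_add ht, Real.rpow_natCast,
    show -((1 + α) * t) = -(1 * t) + -(α * t) by ring, Real.exp_add, add_comm 1 α, Real.one_rpow]
  field_simp
  ring

lemma lintegral_poissonWeight_gammaMeasure {α γ : ℝ} (hα : 0 ≤ α) (hγ : 0 < γ) (n : ℕ) :
    ∫⁻ t, ENNReal.ofReal (Real.exp (-(α * t)) * (α * t) ^ n / n !) ∂gammaMeasure γ 1 =
      ENNReal.ofReal (negBinomialPMFReal α γ n) := by
  rw [gammaMeasure, lintegral_withDensity_eq_lintegral_mul _ (by unfold gammaPDF; fun_prop)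
    (by fun_prop)]
  calc _ = ∫⁻ t, ENNReal.ofReal (negBinomialPMFReal α γ n) * gammaPDF (n + γ) (1 + α) t := by
        refine lintegral_congr_ae ?_
        filter_upwards [compl_mem_ae_iff.2 (measure_singleton (0 : ℝ))] with t ht
        rcases lt_or_gt_of_ne (show t ≠ 0 from ht) with ht | ht
        · simp [gammaPDF_of_neg ht]
        · rw [Pi.mul_apply, gammaPDF_of_nonneg ht.le, gammaPDF_of_nonneg ht.le,
            ← ENNReal.ofReal_mul (by positivity),
            ← ENNReal.ofReal_mul (negBinomialPMFReal_nonneg hα hγ n),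
            poissonWeight_mul_gammaPDFReal hα hγ ht]
    _ = ENNReal.ofReal (negBinomialPMFReal α γ n) := by
        rw [lintegral_const_mul _ (by unfold gammaPDF; fun_prop),
          lintegral_gammaPDF_eq_one (by positivity) (by positivity), mul_one]

lemma negBinomialPMFReal_le_one {α γ : ℝ} (hα : 0 ≤ α) (hγ : 0 < γ) (n : ℕ) :
    negBinomialPMFReal α γ n ≤ 1 := by
  have := isProbabilityMeasure_gammaMeasure hγ one_pos
  refine ENNReal.ofReal_le_one.1 ?_
  calc ENNReal.ofReal (negBinomialPMFReal α γ n)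
      _ = ∫⁻ t, ENNReal.ofReal (Real.exp (-(α * t)) * (α * t) ^ n / n !) ∂gammaMeasure γ 1 :=
        (lintegral_poissonWeight_gammaMeasure hα hγ n).symm
      _ ≤ ∫⁻ _, 1 ∂gammaMeasure γ 1 := by
        refine lintegral_mono_ae ?_
        filter_upwards [ae_nonneg_gammaMeasure γ 1] with t ht
        exact ENNReal.ofReal_le_one.2 (exp_neg_mul_pow_div_factorial_le_one (mul_nonneg hα ht) n)
      _ = 1 := by rw [lintegral_const, measure_univ, one_mul]

lemma lintegral_exp_neg_mul_gammaMeasure {α γ : ℝ} (hα : 0 ≤ α) (hγ : 0 < γ) :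
    ∫⁻ t, ENNReal.ofReal (Real.exp (-(α * t))) ∂gammaMeasure γ 1 =
      ENNReal.ofReal ((1 / (1 + α)) ^ γ) := by
  have h := lintegral_poissonWeight_gammaMeasure hα hγ 0
  simp only [pow_zero, Nat.factorial_zero, Nat.cast_one, mul_one, div_one] at h
  rw [h, negBinomialPMFReal_zero hα hγ]

lemma lintegral_besselDensity_gammaMeasure {α β γ x : ℝ} (hα : 0 ≤ α) (hβ : 0 < β)
    (hγ : 0 < γ) (hx : 0 < x) :
    ∫⁻ t, ENNReal.ofReal ((Ioi 0).indicator (besselDensity (α * t) β) x) ∂gammaMeasure γ 1 =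
      ENNReal.ofReal (gMix α β γ x) := by
  calc _ = ∫⁻ t, ∑' n, ENNReal.ofReal (Real.exp (-(α * t)) * (α * t) ^ (n + 1) / (n + 1)!) *
        ENNReal.ofReal (gammaDens (n + 1 : ℕ) β x) ∂gammaMeasure γ 1 := by
        refine lintegral_congr_ae ?_
        filter_upwards [ae_nonneg_gammaMeasure γ 1] with t ht
        have hαt := mul_nonneg hα ht
        rw [indicator_of_mem (mem_Ioi.2 hx), besselDensity_eq_tsum hαt hβ hx,
          ofReal_tsum_mul_gammaDens (fun n => by positivity)
            (fun n => exp_neg_mul_pow_div_factorial_le_one hαt _) hβ.le hx.le]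
    _ = ∑' n, ENNReal.ofReal (negBinomialPMFReal α γ (n + 1)) *
        ENNReal.ofReal (gammaDens (n + 1 : ℕ) β x) := by
        rw [lintegral_tsum fun n => (by fun_prop : Measurable _).aemeasurable]
        simp_rw [lintegral_mul_const' _ _ ENNReal.ofReal_ne_top,
          lintegral_poissonWeight_gammaMeasure hα hγ]
    _ = ENNReal.ofReal (gMix α β γ x) :=
        (ofReal_tsum_mul_gammaDens (fun n => negBinomialPMFReal_nonneg hα hγ _)
          (fun n => negBinomialPMFReal_le_one hα hγ _) hβ.le hx.le).symm

theorem besselMixture_repr (α β γ : ℝ) (hα : 0 < α) (hβ : 0 < β) (hγ : 0 < γ) :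
    (besselMixture α β γ).restrict (Set.Ici 0) =
      (ENNReal.ofReal ((1 / (1 + α)) ^ γ) • Measure.dirac 0 +
        volume.withDensity fun x =>
          ENNReal.ofReal (Set.indicator (Set.Ici 0) (gMix α β γ) x)).restrict (Set.Ici 0) := by
  have hdens : (fun x => ∫⁻ t, ENNReal.ofReal ((Ioi 0).indicator (besselDensity (α * t) β) x)
      ∂gammaMeasure γ 1) =ᵐ[volume] fun x => ENNReal.ofReal ((Ici 0).indicator (gMix α β γ) x) := by
    filter_upwards [compl_mem_ae_iff.2 (measure_singleton (0 : ℝ))] with x hx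
    rcases lt_or_gt_of_ne (show x ≠ 0 from hx) with hx | hx
    · simp only [indicator_of_notMem (show x ∉ Ioi 0 from not_lt.2 hx.le),
        indicator_of_notMem (show x ∉ Ici 0 from not_le.2 hx), ENNReal.ofReal_zero, lintegral_zero]
    · rw [indicator_of_mem (mem_Ici.2 hx.le),
        lintegral_besselDensity_gammaMeasure hα.le hβ hγ hx]
  rw [besselMixture, bind_besselMeasure, lintegral_exp_neg_mul_gammaMeasure hα.le hγ,
    withDensity_congr_ae hdens]
end

section
/- Fix a, θ, σ, c, d > 0 and let p(t,x,y) be the BAJD transition density (as defined in the context). Then for every x > 0 and every m > 0, ∫_0^m ( ∫_0^∞ p(t,x,y) dt ) dy = ∞; that is, the expected occupation time of the compact set [0,m] by the BAJD started at x is infinite, so the BAJD is not uniformly transient. -/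
open MeasureTheory Set

/-!
For fixed `x, y > 0` the density `p(t, x, y)` is bounded below by a positive constant for
`t ≥ 1`. The convolution term is nonnegative. The prefactor `L₁(t)^{c/Δ}` (or `e^{-α₃(t)}`)
is bounded below because `L₁(t)` is a convex combination of `1` and `σ²d/(2a)`. Keeping only
the `k = 0` term of the Bessel series and using `u ≤ ρx`, the CIR density is at least
`ρ e^{-ρ(x+y)} (ρy)^q / Γ(q+1)`, and for `t ≥ 1` the rate `ρ = ρ(t)` stays in a compact
subinterval of `(0, ∞)`. So `∫₀^∞ p(t,x,y) dt = ∞` for every `y ∈ (0, m]`, and the outer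
integral is infinite as well.
-/

open Real

noncomputable section

/-- The paper's `ρ`. -/
def cirRate (a σ t : ℝ) : ℝ :=
  2 * a / (σ ^ 2 * (1 - exp (-a * t)))

/-- The series in `I_q(2√w) = w^{q/2} ∑ₖ wᵏ / (k! Γ(q+k+1))`. -/
def besselSeries (q w : ℝ) : ℝ :=
  ∑' k : ℕ, w ^ k / (k.factorial * Gamma (q + k + 1))

/-- The paper's `L₁(t)^{c/Δ}`, or `e^{-α₃(t)}` when `Δ = 0`. -/
def bajdWeight (a σ c d t : ℝ) : ℝ :=
  if a - σ ^ 2 * d / 2 = 0 then exp (-((c / a) * (1 - exp (-a * t))))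
  else L1 a σ d t ^ (c / (a - σ ^ 2 * d / 2))

end

section Bessel

variable {q w r : ℝ}

theorem Gamma_add_natCast_add_one_pos (hq : 0 < q + 1) (k : ℕ) : 0 < Gamma (q + k + 1) :=
  Gamma_pos_of_pos (by linarith [k.cast_nonneg (α := ℝ)])

theorem Gamma_mul_pow_mul_factorial_le (hq : 0 < q + 1) (k : ℕ) :
    Gamma (q + 1) * min 1 (q + 1) ^ k * k.factorial ≤ Gamma (q + k + 1) := by
  induction k with
  | zero => simp
  | succ n ih =>
    have hqn : 0 < q + n + 1 := by linarith [n.cast_nonneg (α := ℝ)]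
    have hstep : min 1 (q + 1) * (n + 1 : ℝ) ≤ q + n + 1 := by
      have h1 : min 1 (q + 1) ≤ 1 := min_le_left _ _
      have h2 : min 1 (q + 1) ≤ q + 1 := min_le_right _ _
      nlinarith
    calc Gamma (q + 1) * min 1 (q + 1) ^ (n + 1) * (n + 1).factorial
        = (Gamma (q + 1) * min 1 (q + 1) ^ n * n.factorial) * (min 1 (q + 1) * (n + 1)) := by
          push_cast [Nat.factorial_succ]; ring
      _ ≤ Gamma (q + n + 1) * (q + n + 1) := by gcongr
      _ = Gamma (q + (n + 1 : ℕ) + 1) := by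
          rw [mul_comm, ← Gamma_add_one hqn.ne']; push_cast; ring_nf

theorem summable_besselSeries (hq : 0 < q + 1) (hw : 0 ≤ w) :
    Summable fun k : ℕ => w ^ k / (k.factorial * Gamma (q + k + 1)) := by
  set μ := min 1 (q + 1)
  have hμ : 0 < μ := lt_min one_pos hq
  have hG : 0 < Gamma (q + 1) := Gamma_pos_of_pos hq
  refine Summable.of_nonneg_of_le (fun k => ?_) (fun k => ?_)
    ((summable_pow_div_factorial (w / μ)).mul_right (Gamma (q + 1))⁻¹)
  · have := Gamma_add_natCast_add_one_pos hq k
    positivity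
  · have hfac : (1 : ℝ) ≤ k.factorial := mod_cast Nat.one_le_iff_ne_zero.2 k.factorial_ne_zero
    calc w ^ k / (k.factorial * Gamma (q + k + 1))
        ≤ w ^ k / (k.factorial * (Gamma (q + 1) * μ ^ k * k.factorial)) := by
          gcongr
          exact Gamma_mul_pow_mul_factorial_le hq k
      _ ≤ w ^ k / (1 * (Gamma (q + 1) * μ ^ k * k.factorial)) := by gcongr
      _ = (w / μ) ^ k / k.factorial * (Gamma (q + 1))⁻¹ := by
          rw [div_pow]
          field_simp

theorem inv_Gamma_le_besselSeries (hq : 0 < q + 1) (hw : 0 ≤ w) :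
    (Gamma (q + 1))⁻¹ ≤ besselSeries q w := by
  simpa [besselSeries] using (summable_besselSeries hq hw).le_tsum 0 fun k _ => by
    have := Gamma_add_natCast_add_one_pos hq k
    positivity

theorem besselI_two_mul_sqrt (hw : 0 ≤ w) :
    besselI q (2 * √w) = w ^ (q / 2) * besselSeries q w := by
  have hsq : (2 * √w) ^ 2 / 4 = w := by rw [mul_pow, sq_sqrt hw]; ring
  rw [besselI, hsq, mul_div_cancel_left₀ _ two_ne_zero, sqrt_eq_rpow, ← rpow_mul hw,
    one_div_mul_eq_div, besselSeries]

theorem besselI_nonneg (hq : 0 < q + 1) (hr : 0 ≤ r) : 0 ≤ besselI q r := by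
  refine mul_nonneg (rpow_nonneg (by linarith) _) (tsum_nonneg fun k => ?_)
  have := Gamma_add_natCast_add_one_pos hq k
  positivity

theorem besselI1_nonneg (hr : 0 ≤ r) : 0 ≤ besselI1 r :=
  mul_nonneg (by linarith) (tsum_nonneg fun k => by positivity)

end Bessel

section Densities

variable {a θ σ c d t x y z : ℝ}

theorem gammaDens_nonneg {k r : ℝ} (hk : 0 < k) (hr : 0 ≤ r) (hx : 0 ≤ x) :
    0 ≤ gammaDens k r x := by
  have := Gamma_pos_of_pos hk
  unfold gammaDens
  positivity

theorem gMix_nonneg {α β γ : ℝ} (hα : 0 ≤ α) (hβ : 0 ≤ β) (hγ : 0 < γ) (hx : 0 ≤ x) :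
    0 ≤ gMix α β γ x := by
  refine tsum_nonneg fun k => mul_nonneg ?_ (gammaDens_nonneg (by positivity) hβ hx)
  have := Gamma_pos_of_pos hγ
  have := Gamma_pos_of_pos (show 0 < ((k + 1 : ℕ) : ℝ) + γ by positivity)
  positivity

theorem L1_mem_uIcc (ha : 0 ≤ a) (ht : 0 ≤ t) : L1 a σ d t ∈ uIcc 1 (σ ^ 2 * d / (2 * a)) := by
  rw [← segment_eq_uIcc]
  refine ⟨exp (-a * t), 1 - exp (-a * t), (exp_pos _).le, ?_, by ring, ?_⟩
  · linarith [exp_le_one_iff.2 (by nlinarith : -a * t ≤ 0)]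
  · simp only [L1, smul_eq_mul]
    ring

theorem L1_pos (ha : 0 < a) (hσ : σ ≠ 0) (hd : 0 < d) (ht : 0 ≤ t) : 0 < L1 a σ d t :=
  (lt_min one_pos (by positivity)).trans_le (L1_mem_uIcc ha.le ht).1

theorem cirRate_pos (ha : 0 < a) (hσ : σ ≠ 0) (ht : 0 < t) : 0 < cirRate a σ t := by
  have : exp (-a * t) < 1 := exp_lt_one_iff.2 (by nlinarith)
  unfold cirRate
  exact div_pos (by positivity) (mul_pos (by positivity) (by linarith))

theorem cirDensity_nonneg (ha : 0 < a) (hθ : 0 < θ) (hσ : σ ≠ 0) (ht : 0 < t) (hx : 0 < x)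
    (hy : 0 ≤ y) : 0 ≤ cirDensity a θ σ t x y := by
  have hρ := cirRate_pos ha hσ ht
  simp only [cirDensity, if_neg hx.ne']
  refine mul_nonneg (mul_nonneg (by positivity) (rpow_nonneg (by positivity) _))
    (besselI_nonneg ?_ (by positivity))
  simp only [sub_add_cancel]
  positivity

theorem bajdJump_nonneg (ha : 0 < a) (hσ : σ ≠ 0) (hc : 0 < c) (hd : 0 < d) (ht : 0 ≤ t)
    (hz : 0 ≤ z) : 0 ≤ bajdJump a σ c d t z := by
  have hL := L1_mem_uIcc (σ := σ) (d := d) ha.le ht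
  have hLpos := L1_pos ha hσ hd ht
  unfold bajdJump
  split_ifs with hpos hneg
  · have hκ : σ ^ 2 * d / (2 * a) ≤ 1 := by
      rw [div_le_one (by positivity)]; linarith
    rw [uIcc_of_ge hκ] at hL
    refine gMix_nonneg ?_ (by positivity) (by positivity) hz
    linarith [one_le_one_div hLpos hL.2]
  · have hκ : 1 ≤ σ ^ 2 * d / (2 * a) := by
      rw [le_div_iff₀ (by positivity)]; linarith
    rw [uIcc_of_le hκ] at hL
    exact gMix_nonneg (by linarith [hL.1]) hd.le (div_pos_of_neg_of_neg (by linarith) hneg) hz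
  · have hexp : 0 ≤ 1 - exp (-a * t) := by linarith [exp_le_one_iff.2 (by nlinarith : -a * t ≤ 0)]
    exact mul_nonneg (by positivity) (besselI1_nonneg (by positivity))

theorem bajdWeight_mul_cirDensity_le (ha : 0 < a) (hθ : 0 < θ) (hσ : σ ≠ 0) (hc : 0 < c)
    (hd : 0 < d) (ht : 0 < t) (hx : 0 < x) (hy : 0 ≤ y) :
    bajdWeight a σ c d t * cirDensity a θ σ t x y ≤ bajdDensity a θ σ c d t x y :=
  le_add_of_nonneg_right <| intervalIntegral.integral_nonneg hy fun z hz =>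
    mul_nonneg (cirDensity_nonneg ha hθ hσ ht hx (by linarith [hz.2]))
      (bajdJump_nonneg ha hσ hc hd ht.le hz.1)

end Densities

section LowerBounds

variable {a θ σ c d t x y : ℝ}

theorem cirRate_mem_Icc (ha : 0 < a) (hσ : σ ≠ 0) (ht : 1 ≤ t) :
    cirRate a σ t ∈ Icc (2 * a / σ ^ 2) (cirRate a σ 1) := by
  have hσ2 : 0 < σ ^ 2 := by positivity
  have hexp : exp (-a * t) ≤ exp (-a * 1) := exp_le_exp.2 (by nlinarith)
  have hexp1 : exp (-a * 1) < 1 := exp_lt_one_iff.2 (by linarith)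
  have hexp0 := exp_pos (-a * t)
  unfold cirRate
  constructor
  · exact div_le_div_of_nonneg_left (by positivity) (mul_pos hσ2 (by linarith))
      (mul_le_of_le_one_right hσ2.le (by linarith))
  · exact div_le_div_of_nonneg_left (by positivity) (mul_pos hσ2 (by linarith))
      (mul_le_mul_of_nonneg_left (by linarith) hσ2.le)

theorem cirDensity_ge (ha : 0 < a) (hθ : 0 < θ) (hσ : σ ≠ 0) (ht : 0 < t) (hx : 0 < x)
    (hy : 0 < y) :
    cirRate a σ t * exp (-(cirRate a σ t * (x + y))) *
        (cirRate a σ t * y) ^ (2 * a * θ / σ ^ 2 - 1) / Gamma (2 * a * θ / σ ^ 2) ≤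
      cirDensity a θ σ t x y := by
  set ρ := cirRate a σ t
  set q := 2 * a * θ / σ ^ 2 - 1
  have hρ : 0 < ρ := cirRate_pos ha hσ ht
  have hq : 0 < q + 1 := by simp only [q, sub_add_cancel]; positivity
  set u := ρ * x * exp (-a * t)
  set v := ρ * y
  have hu : 0 < u := by positivity
  have hv : 0 < v := by positivity
  have hux : u ≤ ρ * x := mul_le_of_le_one_right (by positivity) (exp_le_one_iff.2 (by nlinarith))
  have hpow : (v / u) ^ (q / 2) * (u * v) ^ (q / 2) = v ^ q := by
    rw [← mul_rpow (by positivity) (by positivity), div_mul_eq_mul_div, mul_comm u v,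
      mul_div_assoc, mul_div_cancel_right₀ _ hu.ne', ← sq, ← rpow_natCast, ← rpow_mul hv.le]
    congr 1
    ring
  have hcir : cirDensity a θ σ t x y = ρ * exp (-u - v) * v ^ q * besselSeries q (u * v) := by
    have : cirDensity a θ σ t x y =
        ρ * exp (-u - v) * (v / u) ^ (q / 2) * besselI q (2 * √(u * v)) := by
      simp only [cirDensity, if_neg hx.ne']
      rfl
    rw [this, besselI_two_mul_sqrt (by positivity), mul_assoc _ ((v / u) ^ (q / 2)),
      ← mul_assoc ((v / u) ^ (q / 2)), hpow]
    ring
  rw [hcir, div_eq_mul_inv, show 2 * a * θ / σ ^ 2 = q + 1 from (sub_add_cancel _ _).symm]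
  gcongr
  · linarith
  · exact inv_Gamma_le_besselSeries hq (by positivity)

theorem exists_pos_le_cirDensity (ha : 0 < a) (hθ : 0 < θ) (hσ : σ ≠ 0) (hx : 0 < x)
    (hy : 0 < y) : ∃ ε > 0, ∀ t, 1 ≤ t → ε ≤ cirDensity a θ σ t x y := by
  set q := 2 * a * θ / σ ^ 2 - 1
  have hlo : 0 < 2 * a / σ ^ 2 := by positivity
  have hG : 0 < Gamma (2 * a * θ / σ ^ 2) := Gamma_pos_of_pos (by positivity)
  let F r := r * exp (-(r * (x + y))) * (r * y) ^ q / Gamma (2 * a * θ / σ ^ 2)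
  have hF : ContinuousOn F (Icc (2 * a / σ ^ 2) (cirRate a σ 1)) :=
    ((continuousOn_id.mul (by fun_prop)).mul ((continuousOn_id.mul continuousOn_const).rpow_const
      fun r hr => Or.inl (mul_pos (hlo.trans_le hr.1) hy).ne')).div_const _
  obtain ⟨ε, hε, hle⟩ := isCompact_Icc.exists_forall_le' hF fun r hr => by
    have := hlo.trans_le hr.1
    positivity
  exact ⟨ε, hε, fun t ht =>
    (hle _ (cirRate_mem_Icc ha hσ ht)).trans (cirDensity_ge ha hθ hσ (by linarith) hx hy)⟩

theorem exists_pos_le_bajdWeight (ha : 0 < a) (hσ : σ ≠ 0) (hc : 0 ≤ c) (hd : 0 < d) :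
    ∃ K > 0, ∀ t, 0 ≤ t → K ≤ bajdWeight a σ c d t := by
  unfold bajdWeight
  split_ifs with hΔ
  · refine ⟨exp (-(c / a)), exp_pos _, fun t ht => exp_le_exp.2 ?_⟩
    have : 0 < exp (-a * t) := exp_pos _
    have : 0 ≤ c / a := by positivity
    nlinarith
  · have hmin : 0 < min 1 (σ ^ 2 * d / (2 * a)) := lt_min one_pos (by positivity)
    obtain ⟨K, hK, hle⟩ := isCompact_uIcc.exists_forall_le'
      (continuousOn_id.rpow_const fun s hs => Or.inl (hmin.trans_le hs.1).ne')
      fun s hs => rpow_pos_of_pos (hmin.trans_le hs.1) (c / (a - σ ^ 2 * d / 2))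
    exact ⟨K, hK, fun t ht => hle _ (L1_mem_uIcc ha.le ht)⟩

theorem exists_pos_le_bajdDensity (ha : 0 < a) (hθ : 0 < θ) (hσ : σ ≠ 0) (hc : 0 < c)
    (hd : 0 < d) (hx : 0 < x) (hy : 0 < y) :
    ∃ δ > 0, ∀ t, 1 ≤ t → δ ≤ bajdDensity a θ σ c d t x y := by
  obtain ⟨K, hK, hKle⟩ := exists_pos_le_bajdWeight ha hσ hc.le hd
  obtain ⟨ε, hε, hεle⟩ := exists_pos_le_cirDensity ha hθ hσ hx hy
  refine ⟨K * ε, by positivity, fun t ht => ?_⟩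
  have ht0 : 0 < t := by linarith
  calc K * ε ≤ bajdWeight a σ c d t * cirDensity a θ σ t x y :=
        mul_le_mul (hKle t ht0.le) (hεle t ht) hε.le (hK.le.trans (hKle t ht0.le))
    _ ≤ bajdDensity a θ σ c d t x y :=
        bajdWeight_mul_cirDensity_le ha hθ hσ hc hd ht0 hx hy.le

end LowerBounds

theorem lintegral_Ioi_ofReal_eq_top {f : ℝ → ℝ} {δ T : ℝ} (hδ : 0 < δ)
    (hf : ∀ t, T ≤ t → δ ≤ f t) (s : ℝ) : ∫⁻ t in Ioi s, ENNReal.ofReal (f t) = ⊤ := by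
  refine eq_top_iff.2 ?_
  calc (⊤ : ENNReal) = ∫⁻ _ in Ioi (max s T), ENNReal.ofReal δ := by
        rw [setLIntegral_const, volume_Ioi, ENNReal.mul_top (by positivity)]
    _ ≤ ∫⁻ t in Ioi (max s T), ENNReal.ofReal (f t) :=
        setLIntegral_mono' measurableSet_Ioi fun t ht =>
          ENNReal.ofReal_le_ofReal (hf t (le_max_right s T |>.trans ht.le))
    _ ≤ ∫⁻ t in Ioi s, ENNReal.ofReal (f t) :=
        lintegral_mono_set (Ioi_subset_Ioi (le_max_left _ _))

theorem bajd_not_uniformly_transient (a θ σ c d : ℝ) (ha : 0 < a) (hθ : 0 < θ)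
    (hσ : 0 < σ) (hc : 0 < c) (hd : 0 < d) (x : ℝ) (hx : 0 < x) (m : ℝ) (hm : 0 < m) :
    ∫⁻ y in Set.Ioc (0 : ℝ) m,
      ∫⁻ t in Set.Ioi (0 : ℝ), ENNReal.ofReal (bajdDensity a θ σ c d t x y) = ⊤ := by
  have hinner : ∀ y ∈ Ioc (0 : ℝ) m,
      ∫⁻ t in Ioi (0 : ℝ), ENNReal.ofReal (bajdDensity a θ σ c d t x y) = ⊤ := fun y hy => by
    obtain ⟨δ, hδ, hle⟩ := exists_pos_le_bajdDensity ha hθ hσ.ne' hc hd hx hy.1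
    exact lintegral_Ioi_ofReal_eq_top hδ hle 0
  rw [setLIntegral_congr_fun measurableSet_Ioc hinner, setLIntegral_const, volume_Ioc,
    ENNReal.top_mul (by simpa using hm)]
end
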